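/- arXiv:1510.03692 — 5 statements merged into one kernel-verified Lean document; each statement's English description precedes it below -/
import Mathlib

section
/- For all natural numbers n, the fourth power of the harmonic number satisfies: (∑_{i=1}^n 1/i)^4 = 4·S_{1,3}(n) + 6·S_{2,2}(n) + 4·S_{3,1}(n) − 12·S_{1,1,2}(n) − 12·S_{1,2,1}(n) − 12·S_{2,1,1}(n) + 24·S_{1,1,1,1}(n) − S_4(n), where S_{a_1,...,a_k}(n) = ∑_{n ≥ i_1 ≥ i_2 ≥ ... ≥ i_k ≥ 1} 1/(i_1^{a_1}·...·i_k^{a_k}). -/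
/-- Nested harmonic sums over ℚ: `S [a₁,...,a_k] n = ∑_{i=1}^n (1/i^{a₁}) · S [a₂,...,a_k] i`. -/
def S : List ℕ → ℕ → ℚ
  | [], _ => 1
  | a :: as, n => ∑ i ∈ Finset.Icc 1 n, (1 / (i : ℚ) ^ a) * S as i

lemma S_succ (a : ℕ) (as : List ℕ) (n : ℕ) :
    S (a :: as) (n + 1) = S (a :: as) n + (1 / ((n : ℚ) + 1)) ^ a * S as (n + 1) := by
  have h : (1 : ℕ) ≤ n + 1 := Nat.le_add_left 1 n
  simp only [S, Finset.sum_Icc_succ_top h, div_pow, one_pow]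
  push_cast
  ring

lemma S_nil (n : ℕ) : S [] n = 1 := rfl

lemma hp2 (n : ℕ) : (S [1] n) ^ 2 = 2 * S [1, 1] n - S [2] n := by
  induction n with
  | zero => simp [S]
  | succ n ih =>
    simp only [S_succ, S_nil]
    linear_combination ih

lemma hp3 (n : ℕ) : (S [1] n) ^ 3 =
    6 * S [1, 1, 1] n - 3 * S [1, 2] n - 3 * S [2, 1] n + S [3] n := by
  induction n with
  | zero => simp [S]
  | succ n ih =>
    simp only [S_succ, S_nil]
    linear_combination ih + 3 * (1 / ((n : ℚ) + 1)) * hp2 n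

lemma harm_eq (n : ℕ) : (∑ i ∈ Finset.Icc 1 n, (1 : ℚ) / i) = S [1] n := by
  simp [S]

theorem harmonic_fourth_power (n : ℕ) :
    (∑ i ∈ Finset.Icc 1 n, (1 : ℚ) / i) ^ 4 =
      4 * S [1, 3] n + 6 * S [2, 2] n + 4 * S [3, 1] n - 12 * S [1, 1, 2] n -
        12 * S [1, 2, 1] n - 12 * S [2, 1, 1] n + 24 * S [1, 1, 1, 1] n - S [4] n := by
  rw [harm_eq]
  induction n with
  | zero => simp [S]
  | succ n ih =>
    simp only [S_succ, S_nil]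
    linear_combination ih + 4 * (1 / ((n : ℚ) + 1)) * hp3 n
      + 6 * (1 / ((n : ℚ) + 1)) ^ 2 * hp2 n
end

section
/- Consider the difference field (K(n), σ) where K is a field of characteristic 0, n is transcendental over K, and σ(n) = n+1. Let q ∈ K[n]\K be a nonconstant polynomial with dispersion disp(q,q) = 0, where disp(q,q) = max{k ≥ 0 : gcd(q, σ^k(q)) ≠ 1}, i.e., gcd(q(n), q(n+k)) = 1 for all k ≥ 1. Let u ∈ K\{0}, and let v ∈ K[n] with gcd(v,q) = 1. Then there is no g ∈ K(n) such that σ(g) + u·g = v/q. -/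
open Polynomial

private lemma map_taylor' {R S : Type*} [CommRing R] [CommRing S] (f : R →+* S) (r : R)
    (p : R[X]) : (Polynomial.taylor r p).map f = Polynomial.taylor (f r) (p.map f) := by
  simp [Polynomial.taylor_apply, Polynomial.map_comp]

/-- Lemma 6.8: in the difference field `(K(n), σ)` with `σ(n) = n + 1`, if
`q ∈ K[n]\K` is nonconstant with dispersion `disp(q,q) = 0` (i.e.
`gcd(q(n), q(n+k)) = 1` for all `k ≥ 1`), `u ∈ K\{0}` and `v ∈ K[n]` with
`gcd(v, q) = 1`, then there is no `g ∈ K(n)` with `σ(g) + u·g = v/q`.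
The rational function `g = g₁/g₂` and the equation are expressed after clearing
denominators; `σ` acts on polynomials as the Taylor shift `p(n) ↦ p(n+1)`. -/
theorem no_rational_solution
    (K : Type*) [Field K] [CharZero K]
    (q : Polynomial K) (hq : 0 < q.natDegree)
    (hdisp : ∀ k : ℕ, 1 ≤ k → IsCoprime q (Polynomial.taylor (k : K) q))
    (u : K) (hu : u ≠ 0)
    (v : Polynomial K) (hv : IsCoprime v q) :
    ¬ ∃ g₁ g₂ : Polynomial K, g₂ ≠ 0 ∧
      (Polynomial.taylor (1 : K) g₁) * g₂ * q + C u * g₁ * (Polynomial.taylor (1 : K) g₂) * q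
        = v * (Polynomial.taylor (1 : K) g₂) * g₂ := by
  classical
  rintro ⟨g₁, g₂, hg₂, heq⟩
  -- reduce to coprime numerator/denominator
  set d := GCDMonoid.gcd g₁ g₂ with hd
  have hd0 : d ≠ 0 := fun h => hg₂ ((gcd_eq_zero_iff g₁ g₂).mp h).2
  set a := g₁ / d with ha
  set b := g₂ / d with hb
  have hab : IsCoprime a b := isCoprime_div_gcd_div_gcd hg₂
  have hg1 : g₁ = d * a := (EuclideanDomain.mul_div_cancel' hd0 (GCDMonoid.gcd_dvd_left g₁ g₂)).symm
  have hg2 : g₂ = d * b := (EuclideanDomain.mul_div_cancel' hd0 (GCDMonoid.gcd_dvd_right g₁ g₂)).symm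
  have hb0 : b ≠ 0 := fun h => hg₂ (by rw [hg2, h, mul_zero])
  have hTd0 : Polynomial.taylor (1 : K) d ≠ 0 := fun h => hd0 (by
    have := Polynomial.taylor_injective (1 : K) (a₁ := d) (a₂ := 0) (by simpa using h)
    simpa using this)
  -- reduced equation
  have heq' : (Polynomial.taylor (1 : K) a) * b * q + C u * a * (Polynomial.taylor (1 : K) b) * q
      = v * (Polynomial.taylor (1 : K) b) * b := by
    have h2 : (d * Polynomial.taylor (1 : K) d) *
        ((Polynomial.taylor (1 : K) a) * b * q + C u * a * (Polynomial.taylor (1 : K) b) * q)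
        = (d * Polynomial.taylor (1 : K) d) * (v * (Polynomial.taylor (1 : K) b) * b) := by
      have h3 := heq
      rw [hg1, hg2] at h3
      simp only [Polynomial.taylor_mul] at h3
      ring_nf at h3 ⊢
      linear_combination h3
    exact mul_left_cancel₀ (mul_ne_zero hd0 hTd0) h2
  set Tb := Polynomial.taylor (1 : K) b with hTb
  set Ta := Polynomial.taylor (1 : K) a with hTa
  have hTab : IsCoprime Ta Tb := by
    have := hab.map (Polynomial.taylorAlgHom (1 : K)).toRingHom
    simpa [Polynomial.coe_taylorAlgHom, hTa, hTb] using this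
  -- divisibilities
  have hqdvd : q ∣ b * Tb := by
    have h1 : q ∣ (b * Tb) * v := ⟨Ta * b + C u * a * Tb, by linear_combination -heq'⟩
    exact (hv.symm).dvd_of_dvd_mul_right h1
  have hbdvd : b ∣ q * Tb := by
    have h1 : b ∣ (C u * a) * (q * Tb) := ⟨v * Tb - Ta * q, by linear_combination heq'⟩
    have hcop : IsCoprime b (C u * a) :=
      (isCoprime_mul_unit_left_right (isUnit_C.mpr hu.isUnit) b a).mpr hab.symm
    exact hcop.dvd_of_dvd_mul_left h1
  have hTbdvd : Tb ∣ q * b := by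
    have h1 : Tb ∣ Ta * (q * b) := ⟨v * b - C u * a * q, by linear_combination heq'⟩
    exact (hTab.symm).dvd_of_dvd_mul_left h1
  -- b is nonconstant
  have hbnc : 0 < b.natDegree := by
    rcases Nat.eq_zero_or_pos b.natDegree with h0 | h
    · exfalso
      have hbC : b = C (b.coeff 0) := Polynomial.eq_C_of_natDegree_eq_zero h0
      have hc0 : b.coeff 0 ≠ 0 := fun h => hb0 (by rw [hbC, h, C_0])
      have hcu : IsUnit (b * Tb) := by
        rw [hTb, hbC, Polynomial.taylor_C, ← C_mul]
        exact isUnit_C.mpr (mul_self_ne_zero.mpr hc0).isUnit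
      have : IsUnit q := isUnit_of_dvd_unit hqdvd hcu
      exact absurd (Polynomial.natDegree_eq_zero_of_isUnit this) (by omega)
    · exact h
  -- pass to the algebraic closure
  set L := AlgebraicClosure K
  set φ := algebraMap K L with hφ
  set B := b.map φ with hB
  set Q := q.map φ with hQ
  have hB0 : B ≠ 0 := Polynomial.map_ne_zero hb0
  have hTbB : Tb.map φ = Polynomial.taylor (1 : L) B := by
    rw [hTb, map_taylor' φ, map_one]
  have hbL : B ∣ Q * Polynomial.taylor (1 : L) B := by
    have := Polynomial.map_dvd φ hbdvd
    rwa [Polynomial.map_mul, hTbB] at this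
  have hTbL : Polynomial.taylor (1 : L) B ∣ Q * B := by
    have := Polynomial.map_dvd φ hTbdvd
    rwa [Polynomial.map_mul, hTbB] at this
  -- find a root of B
  have hBdeg : B.degree ≠ 0 := by
    rw [Polynomial.degree_eq_natDegree hB0]
    simp only [hB, Polynomial.natDegree_map]
    exact_mod_cast (by omega : b.natDegree ≠ 0)
  obtain ⟨γ, hγ⟩ := IsAlgClosed.exists_root B hBdeg
  -- the set of integer shifts of γ that are roots of B
  have hinj : Function.Injective (fun k : ℤ => γ + (k : L)) := by
    intro x y hxy
    simp only [add_right_inj] at hxy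
    exact_mod_cast hxy
  have hfin : Set.Finite {k : ℤ | B.eval (γ + (k : L)) = 0} := by
    have : {k : ℤ | B.eval (γ + (k : L)) = 0}
        = (fun k : ℤ => γ + (k : L)) ⁻¹' {x | B.IsRoot x} := rfl
    rw [this]
    exact Set.Finite.preimage hinj.injOn (Polynomial.finite_setOf_isRoot hB0)
  set Tf := hfin.toFinset with hTf
  have hne : Tf.Nonempty := ⟨0, by simp [hTf, hγ.eq_zero]⟩
  set m := Tf.max' hne with hm
  set l := Tf.min' hne with hl
  have hmem_m : B.eval (γ + (m : L)) = 0 := by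
    have := Tf.max'_mem hne
    rw [Set.Finite.mem_toFinset] at this
    exact this
  have hmem_l : B.eval (γ + (l : L)) = 0 := by
    have := Tf.min'_mem hne
    rw [Set.Finite.mem_toFinset] at this
    exact this
  have hlm : l ≤ m := Tf.min'_le _ (Tf.max'_mem hne)
  have hm1 : B.eval (γ + (m : L) + 1) ≠ 0 := by
    intro h
    have hmemT : (m + 1 : ℤ) ∈ Tf := by
      rw [Set.Finite.mem_toFinset]
      show B.eval (γ + ((m + 1 : ℤ) : L)) = 0
      push_cast
      rw [← add_assoc]
      exact h
    have := Tf.le_max' _ hmemT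
    omega
  have hl1 : B.eval (γ + (l : L) - 1) ≠ 0 := by
    intro h
    have hmemT : (l - 1 : ℤ) ∈ Tf := by
      rw [Set.Finite.mem_toFinset]
      show B.eval (γ + ((l - 1 : ℤ) : L)) = 0
      push_cast
      rw [← add_sub_assoc]
      exact h
    have := Tf.min'_le _ hmemT
    omega
  -- Q vanishes at γ + m and γ + l - 1
  have hQm : Q.eval (γ + (m : L)) = 0 := by
    obtain ⟨c, hc⟩ := hbL
    have h1 : Q.eval (γ + (m : L)) * B.eval (γ + (m : L) + 1) = 0 := by
      have := congrArg (Polynomial.eval (γ + (m : L))) hc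
      simp only [Polynomial.eval_mul, Polynomial.taylor_eval] at this
      rw [hmem_m, zero_mul] at this
      rw [← this]
    rcases mul_eq_zero.mp h1 with h | h
    · exact h
    · exact absurd h hm1
  have hQl : Q.eval (γ + (l : L) - 1) = 0 := by
    obtain ⟨c, hc⟩ := hTbL
    have h1 : Q.eval (γ + (l : L) - 1) * B.eval (γ + (l : L) - 1) = 0 := by
      have := congrArg (Polynomial.eval (γ + (l : L) - 1)) hc
      simp only [Polynomial.eval_mul, Polynomial.taylor_eval, sub_add_cancel] at this
      rw [hmem_l, zero_mul] at this
      rw [← this]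
    rcases mul_eq_zero.mp h1 with h | h
    · exact h
    · exact absurd h hl1
  -- contradiction with the dispersion hypothesis
  set k : ℕ := (m - l + 1).toNat with hk
  have hk1 : 1 ≤ k := by omega
  have hkc : ((k : ℤ) : L) = (m : L) - (l : L) + 1 := by
    have : (k : ℤ) = m - l + 1 := by omega
    rw [this]; push_cast; ring
  have hcop := (hdisp k hk1).map (Polynomial.mapRingHom φ)
  rw [Polynomial.coe_mapRingHom] at hcop
  have htq : (Polynomial.taylor ((k : ℕ) : K) q).map φ = Polynomial.taylor ((k : ℕ) : L) Q := by
    rw [map_taylor' φ, map_natCast]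
  rw [htq] at hcop
  obtain ⟨s, t, hst⟩ := hcop
  have := congrArg (Polynomial.eval (γ + (l : L) - 1)) hst
  simp only [Polynomial.eval_add, Polynomial.eval_mul, Polynomial.taylor_eval,
    Polynomial.eval_one] at this
  have heval : Q.eval (γ + (l : L) - 1 + ((k : ℕ) : L)) = 0 := by
    have hx : γ + (l : L) - 1 + ((k : ℕ) : L) = γ + (m : L) := by
      have : ((k : ℕ) : L) = ((k : ℤ) : L) := by push_cast; ring
      rw [this, hkc]; ring
    rw [hx]; exact hQm
  rw [hQl, heval, mul_zero, mul_zero, add_zero] at this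
  exact one_ne_zero this.symm
end

section
/- Consider the difference ring (K(n)[x], σ) where K is a field of characteristic 0, σ(n) = n+1, σ(x) = −x, and x² = 1. Let p ∈ K[n]\K be nonconstant with gcd(p(n), p(n+k)) = 1 for all integers k ≥ 1, and let f = f₀ + f₁·x be nonzero with f₀, f₁ of the form a/p^m with m ≥ 1 and gcd(a, p) = 1 (proper p-denominators). Then there is no g ∈ K(n)[x] with σ(g) − g = f. -/
/-!
Fix an irreducible factor `q` of `p` and let `v j` be the valuation of `K(n)` at the shifted
prime `q(n + j)`, `j ∈ ℤ`; then `v j (σ g) = v (j - 1) g`. The dispersion hypothesis makes the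
shifts of `q` pairwise non-associate and coprime to `p` except for `j = 0`, so `f₀` has a pole at
`v 0` and at no other `v j`. A solution `g₀` of `σ g₀ - g₀ = f₀` has finitely many poles on this
orbit. If `k ≤ k'` are the lowest and highest of them, then `σ g₀ - g₀` has a pole both at `k` and
at `k' + 1`, two distinct points of the orbit; and if there is none, `σ g₀ - g₀` has no pole at all
on the orbit.
-/

open Polynomial IsDedekindDomain IsDedekindDomain.HeightOneSpectrum

namespace IsDedekindDomain.HeightOneSpectrum

def ofPrimeElement {R : Type*} [CommRing R] {r : R} (hr : Prime r) : HeightOneSpectrum R where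
  asIdeal := Ideal.span {r}
  isPrime := (Ideal.span_singleton_prime hr.ne_zero).mpr hr
  ne_bot := by simpa using hr.ne_zero

section

variable {R K : Type*} [CommRing R] [IsDedekindDomain R] [Field K] [Algebra R K]
  [IsFractionRing R K] {v : HeightOneSpectrum R} {a b : R}

lemma valuation_div_pow_le_one (hbv : b ∉ v.asIdeal) (m : ℕ) :
    v.valuation K (algebraMap R K a / algebraMap R K (b ^ m)) ≤ 1 := by
  have hb : b ≠ 0 := fun h => hbv (h ▸ v.asIdeal.zero_mem)
  have hbm : b ^ m ∉ v.asIdeal := fun h => hbv (v.isPrime.mem_of_pow_mem m h)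
  exact (valuation_div_le_one_iff K v a (pow_ne_zero m hb) (absurd · hbm)).mpr hbm

lemma one_lt_valuation_div_pow (hb : b ≠ 0) (hbv : b ∈ v.asIdeal) (hav : a ∉ v.asIdeal) {m : ℕ}
    (hm : m ≠ 0) : 1 < v.valuation K (algebraMap R K a / algebraMap R K (b ^ m)) := by
  have hbm : b ^ m ∈ v.asIdeal := v.asIdeal.pow_mem_of_mem hbv m (Nat.pos_of_ne_zero hm)
  exact not_le.mp fun h => (valuation_div_le_one_iff K v a (pow_ne_zero m hb) fun _ => hav).mp h hbm

end

variable {R S : Type*} [CommRing R] [IsDedekindDomain R] [IsPrincipalIdealRing R]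
  [CommRing S] [IsDedekindDomain S] [IsPrincipalIdealRing S]

lemma intValuation_eq_exp_neg_multiplicity_of_asIdeal_eq {v : HeightOneSpectrum R} {π r : R}
    (hv : v.asIdeal = Ideal.span {π}) (hr : r ≠ 0) :
    v.intValuation r = WithZero.exp (-(multiplicity π r : ℤ)) := by
  rw [intValuation_eq_exp_neg_multiplicity v hr, hv,
    multiplicity_eq_of_emultiplicity_eq Ideal.emultiplicity_eq_emultiplicity_span]

lemma intValuation_ringEquiv_apply (e : R ≃+* S) {v : HeightOneSpectrum R}
    {w : HeightOneSpectrum S} {π : R} (hv : v.asIdeal = Ideal.span {π})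
    (hw : w.asIdeal = Ideal.span {e π}) (r : R) :
    w.intValuation (e r) = v.intValuation r := by
  rcases eq_or_ne r 0 with rfl | hr
  · simp
  rw [intValuation_eq_exp_neg_multiplicity_of_asIdeal_eq hw (by simpa using hr),
    intValuation_eq_exp_neg_multiplicity_of_asIdeal_eq hv hr, multiplicity_map_eq]

lemma valuation_apply_of_algebraMap_comm {K L : Type*} [Field K] [Field L] [Algebra R K]
    [IsFractionRing R K] [Algebra S L] [IsFractionRing S L] (e : R ≃+* S) (σ : K →+* L)
    (hσ : ∀ r, σ (algebraMap R K r) = algebraMap S L (e r)) {v : HeightOneSpectrum R}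
    {w : HeightOneSpectrum S} {π : R} (hv : v.asIdeal = Ideal.span {π})
    (hw : w.asIdeal = Ideal.span {e π}) (x : K) :
    w.valuation L (σ x) = v.valuation K x := by
  obtain ⟨a, b, -, rfl⟩ := IsFractionRing.div_surjective R x
  simp only [map_div₀, hσ, valuation_of_algebraMap, intValuation_ringEquiv_apply e hv hw]

end IsDedekindDomain.HeightOneSpectrum

section ShiftOrbit

variable {F Γ₀ : Type*} [Ring F] [LinearOrderedCommGroupWithZero Γ₀] {v : ℤ → Valuation F Γ₀}
  {σ : F → F} {g : F}

lemma one_lt_shift_sub_of_isLeast (hσ : ∀ j x, v j (σ x) = v (j - 1) x) {k : ℤ}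
    (hk : IsLeast {j | 1 < v j g} k) : 1 < v k (σ g - g) := by
  have hprev : v (k - 1) g ≤ 1 := not_lt.1 fun h => by have := hk.2 h; omega
  rw [Valuation.map_sub_eq_of_lt_right _ (by rw [hσ]; exact hprev.trans_lt hk.1)]
  exact hk.1

lemma one_lt_shift_sub_of_isGreatest (hσ : ∀ j x, v j (σ x) = v (j - 1) x) {k : ℤ}
    (hk : IsGreatest {j | 1 < v j g} k) : 1 < v (k + 1) (σ g - g) := by
  have hnext : v (k + 1) g ≤ 1 := not_lt.1 fun h => by have := hk.2 h; omega
  have hshift : v (k + 1) (σ g) = v k g := by rw [hσ, add_sub_cancel_right]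
  rw [Valuation.map_sub_eq_of_lt_left _ (by rw [hshift]; exact hnext.trans_lt hk.1), hshift]
  exact hk.1

theorem shift_sub_le_one_at_zero (hσ : ∀ j x, v j (σ x) = v (j - 1) x)
    (hfin : {j | 1 < v j g}.Finite) (hf : ∀ j ≠ 0, v j (σ g - g) ≤ 1) :
    v 0 (σ g - g) ≤ 1 := by
  rcases Set.eq_empty_or_nonempty {j | 1 < v j g} with hS | hS
  · have hle : ∀ j, v j g ≤ 1 := fun j => not_lt.1 fun h => hS.subset h
    exact Valuation.map_sub_le _ (by rw [hσ]; exact hle _) (hle 0)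
  have hS' : hfin.toFinset.Nonempty := hfin.toFinset_nonempty.mpr hS
  have hleast := hfin.coe_toFinset ▸ hfin.toFinset.isLeast_min' hS'
  have hgreatest := hfin.coe_toFinset ▸ hfin.toFinset.isGreatest_max' hS'
  have h0 : hfin.toFinset.min' hS' = 0 := by
    by_contra h
    exact (hf _ h).not_gt (one_lt_shift_sub_of_isLeast hσ hleast)
  have h1 : hfin.toFinset.max' hS' + 1 = 0 := by
    by_contra h
    exact (hf _ h).not_gt (one_lt_shift_sub_of_isGreatest hσ hgreatest)
  have := hleast.2 hgreatest.1
  omega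

end ShiftOrbit

namespace Polynomial

variable {R : Type*} [CommRing R]

lemma taylorEquiv_apply (c : R) (f : R[X]) : taylorEquiv c f = taylor c f := rfl

lemma _root_.Prime.taylor {q : R[X]} (hq : Prime q) (c : R) : Prime (taylor c q) :=
  (MulEquiv.prime_iff (taylorEquiv c)).mpr hq

lemma isCoprime_taylor_intCast {p : R[X]} (h : ∀ k : ℕ, 1 ≤ k → IsCoprime p (taylor (k : R) p))
    {j : ℤ} (hj : j ≠ 0) : IsCoprime p (taylor (j : R) p) := by
  obtain ⟨k, rfl | rfl⟩ := Int.eq_nat_or_neg j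
  · simpa using h k (by omega)
  · have := (h k (by omega)).map (taylorAlgHom (-(k : R))).toRingHom
    simpa [taylor_taylor] using this.symm

lemma not_taylor_dvd_of_isCoprime {p q : R[X]} {c : R} (hq : ¬IsUnit q) (hqp : q ∣ p)
    (h : IsCoprime p (taylor c p)) : ¬taylor c q ∣ p := fun hdvd => by
  have hunit := h.isUnit_of_dvd' hdvd ((taylorAlgHom c).toRingHom.map_dvd hqp)
  exact hq (by simpa [taylor_taylor] using hunit.map (taylorAlgHom (-c)))

end Polynomial

section ShiftedPlaces

variable {K : Type*} [Field K] {q : K[X]}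

noncomputable def shiftedPlace (hq : Prime q) (j : ℤ) : HeightOneSpectrum K[X] :=
  ofPrimeElement (hq.taylor (j : K))

lemma mem_shiftedPlace_iff (hq : Prime q) (j : ℤ) (f : K[X]) :
    f ∈ (shiftedPlace hq j).asIdeal ↔ taylor (j : K) q ∣ f :=
  Ideal.mem_span_singleton

lemma shiftedPlace_injective {p : K[X]} (hq : Prime q) (hqp : q ∣ p)
    (hdisp : ∀ j : ℤ, j ≠ 0 → IsCoprime p (taylor (j : K) p)) :
    Function.Injective (shiftedPlace hq) := by
  intro i j hij
  by_contra hne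
  have hdvd : taylor (i : K) q ∣ taylor (j : K) q := by
    rw [← mem_shiftedPlace_iff hq, hij, mem_shiftedPlace_iff hq]
  have hback : taylor (-(j : K)) (taylor (i : K) q) ∣ taylor (-(j : K)) (taylor (j : K) q) :=
    (taylorAlgHom (-(j : K))).toRingHom.map_dvd hdvd
  rw [taylor_taylor, taylor_taylor, neg_add_cancel, taylor_zero, neg_add_eq_sub,
    ← Int.cast_sub] at hback
  exact not_taylor_dvd_of_isCoprime hq.not_isUnit hqp (hdisp (i - j) (sub_ne_zero.mpr hne))
    (hback.trans hqp)

lemma shiftedPlace_valuation_map (hq : Prime q) {σ : RatFunc K ≃+* RatFunc K}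
    (hσ : ∀ f : K[X],
      σ (algebraMap K[X] (RatFunc K) f) = algebraMap K[X] (RatFunc K) (taylor 1 f))
    (j : ℤ) (x : RatFunc K) :
    (shiftedPlace hq j).valuation (RatFunc K) (σ x)
      = (shiftedPlace hq (j - 1)).valuation (RatFunc K) x := by
  refine valuation_apply_of_algebraMap_comm (taylorEquiv (1 : K)).toRingEquiv σ.toRingHom
    (by simpa [taylorEquiv_apply] using hσ) rfl ?_ x
  simp only [shiftedPlace, ofPrimeElement, AlgEquiv.coe_ringEquiv, taylorEquiv_apply,
    taylor_taylor, Int.cast_sub, Int.cast_one, add_sub_cancel]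

end ShiftedPlaces

theorem no_telescoper_in_Knx_general
    (K : Type*) [Field K]
    (σ : RatFunc K ≃+* RatFunc K)
    (hσ : ∀ q : Polynomial K,
      σ (algebraMap (Polynomial K) (RatFunc K) q)
        = algebraMap (Polynomial K) (RatFunc K) (Polynomial.taylor (1 : K) q))
    (p : Polynomial K) (hp : 0 < p.natDegree)
    (hdisp : ∀ k : ℕ, 1 ≤ k → IsCoprime p (Polynomial.taylor (k : K) p))
    (a₀ : Polynomial K) (m₀ : ℕ) (hm₀ : 1 ≤ m₀)
    (ha₀ : IsCoprime a₀ p)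
    (f₀ f₁ : RatFunc K)
    (hf₀ : f₀ = algebraMap (Polynomial K) (RatFunc K) a₀ /
      algebraMap (Polynomial K) (RatFunc K) (p ^ m₀)) :
    ¬ ∃ g₀ g₁ : RatFunc K, σ g₀ - g₀ = f₀ ∧ -(σ g₁) - g₁ = f₁ := by
  rintro ⟨g₀, -, h₀, -⟩
  have hp0 : p ≠ 0 := ne_zero_of_natDegree_gt hp
  obtain ⟨q, hq, hqp⟩ :=
    WfDvdMonoid.exists_irreducible_factor (not_isUnit_of_natDegree_pos p hp) hp0
  have hdisp' (j : ℤ) (hj : j ≠ 0) := isCoprime_taylor_intCast hdisp hj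
  have hpole : 1 < (shiftedPlace hq.prime 0).valuation (RatFunc K) f₀ := by
    refine hf₀ ▸ one_lt_valuation_div_pow hp0 ?_ ?_ (by omega)
    · simpa [mem_shiftedPlace_iff] using hqp
    · simpa [mem_shiftedPlace_iff] using fun h => hq.not_isUnit (ha₀.isUnit_of_dvd' h hqp)
  have hfin : (shiftedPlace hq.prime ⁻¹' Support K[X] g₀).Finite :=
    (Support.finite K[X] g₀).preimage (shiftedPlace_injective hq.prime hqp hdisp').injOn
  refine hpole.not_ge (h₀ ▸ shift_sub_le_one_at_zero (shiftedPlace_valuation_map hq.prime hσ)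
    hfin ?_)
  intro j hj
  rw [h₀, hf₀]
  refine valuation_div_pow_le_one ?_ m₀
  rw [mem_shiftedPlace_iff]
  exact not_taylor_dvd_of_isCoprime hq.not_isUnit hqp (hdisp' j hj)

/-- Lemma 6.9: in the difference ring `K(n)[x]` with `σ(n) = n+1`, `σ(x) = -x`,
`x² = 1` (elements are represented as pairs `g = g₀ + g₁·x`), if `p ∈ K[n]\K` is
nonconstant with `gcd(p(n), p(n+k)) = 1` for all `k ≥ 1`, and `f = f₀ + f₁·x ≠ 0`
with `f₀, f₁` proper fractions `a/p^m` (`m ≥ 1`, `gcd(a,p) = 1`), then there is no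
`g = g₀ + g₁·x ∈ K(n)[x]` with `σ(g) - g = f`; note
`σ(g₀ + g₁ x) - (g₀ + g₁ x) = (σ(g₀) - g₀) + (-σ(g₁) - g₁)·x`. -/
theorem no_telescoper_in_Knx
    (K : Type*) [Field K] [CharZero K]
    (σ : RatFunc K ≃+* RatFunc K)
    (hσ : ∀ q : Polynomial K,
      σ (algebraMap (Polynomial K) (RatFunc K) q)
        = algebraMap (Polynomial K) (RatFunc K) (Polynomial.taylor (1 : K) q))
    (p : Polynomial K) (hp : 0 < p.natDegree)
    (hdisp : ∀ k : ℕ, 1 ≤ k → IsCoprime p (Polynomial.taylor (k : K) p))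
    (a₀ a₁ : Polynomial K) (m₀ m₁ : ℕ) (hm₀ : 1 ≤ m₀) (hm₁ : 1 ≤ m₁)
    (ha₀ : IsCoprime a₀ p) (ha₁ : IsCoprime a₁ p)
    (f₀ f₁ : RatFunc K)
    (hf₀ : f₀ = algebraMap (Polynomial K) (RatFunc K) a₀ /
      algebraMap (Polynomial K) (RatFunc K) (p ^ m₀))
    (hf₁ : f₁ = algebraMap (Polynomial K) (RatFunc K) a₁ /
      algebraMap (Polynomial K) (RatFunc K) (p ^ m₁))
    (hfne : f₀ ≠ 0 ∨ f₁ ≠ 0) :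
    ¬ ∃ g₀ g₁ : RatFunc K, σ g₀ - g₀ = f₀ ∧ -(σ g₁) - g₁ = f₁ :=
  no_telescoper_in_Knx_general K σ hσ p hp hdisp a₀ m₀ hm₀ ha₀ f₀ f₁ hf₀
end

section
/- Let K be a field of characteristic 0 and extend τ to K(n)[x] = K(n)[X]/(X²−1) by sending f₀ + f₁·x to the germ of the sequence k ↦ f₀(k) + (−1)^k·f₁(k). Then τ: K(n)[x] → S(K) is an injective difference ring homomorphism, where σ(x) = −x on the source and S is the shift on germs. -/
/-!
Evaluation at the naturals is a ring homomorphism from `K(n)` into germs of sequences: a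
denominator has only finitely many roots, and in characteristic `0` the naturals are pairwise
distinct in `K`. With `s` the germ of `(-1)^k` one has `τ(f₀ + f₁x) = f₀ + s·f₁`, `s² = 1`
and `S s = -s`, which gives the ring structure and the compatibility with the shifts; `S`
commutes with evaluation because both sides are ring homomorphisms out of the fraction field
`K(n)` agreeing on `K[n]`. For injectivity, restrict to even and to odd `k`: then `f₀ + f₁`
and `f₀ - f₁` vanish at infinitely many naturals, so they are `0`.
-/

open Filter Polynomial

variable (K : Type*) [Field K]

/-- Evaluation of a rational function at the naturals, value `0` at poles. -/
noncomputable def evalSeq (f : RatFunc K) : ℕ → K :=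
  fun k => RatFunc.eval (RingHom.id K) (k : K) f

/-- `τ` extended to `K(n)[x] = K(n)[X]/(X²-1)`, whose elements are represented
as pairs `f = f₀ + f₁·x`: it sends `f` to the germ of `k ↦ f₀(k) + (-1)^k·f₁(k)`. -/
noncomputable def tau2 (f : RatFunc K × RatFunc K) : Germ (atTop : Filter ℕ) K :=
  Germ.ofFun (fun k => evalSeq K f.1 k + (-1 : K) ^ k * evalSeq K f.2 k)

namespace Filter.Germ

variable {α β γ : Type*} [NonAssocSemiring β] {l : Filter α} {lc : Filter γ}

def compTendstoRingHom (u : γ → α) (hu : Tendsto u lc l) : Germ l β →+* Germ lc β where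
  toFun f := f.compTendsto u hu
  map_one' := rfl
  map_mul' f g := inductionOn₂ f g fun _ _ => rfl
  map_zero' := rfl
  map_add' f g := inductionOn₂ f g fun _ _ => rfl

@[simp]
lemma compTendstoRingHom_coe (u : γ → α) (hu : Tendsto u lc l) (f : α → β) :
    compTendstoRingHom u hu (f : Germ l β) = ↑(f ∘ u) := rfl

end Filter.Germ

section

variable {R : Type*} [Ring R]

noncomputable def altSign : Germ (atTop : Filter ℕ) R := ↑(fun k : ℕ => (-1 : R) ^ k)

lemma altSign_mul_self : altSign * altSign = (1 : Germ atTop R) :=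
  congrArg Germ.ofFun (funext fun k => by simp [← pow_add, ← two_mul, pow_mul])

lemma compTendstoRingHom_succ_altSign :
    Germ.compTendstoRingHom (· + 1) (tendsto_add_atTop_nat 1) altSign
      = -(altSign : Germ atTop R) :=
  congrArg Germ.ofFun (funext fun k => by simp [pow_succ])

lemma compTendstoRingHom_two_mul_altSign (hu : Tendsto (fun i => 2 * i) atTop atTop) :
    Germ.compTendstoRingHom _ hu altSign = (1 : Germ atTop R) :=
  congrArg Germ.ofFun (funext fun k => by simp [pow_mul])

lemma compTendstoRingHom_two_mul_add_one_altSign (hu : Tendsto (fun i => 2 * i + 1) atTop atTop) :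
    Germ.compTendstoRingHom _ hu altSign = (-1 : Germ atTop R) :=
  congrArg Germ.ofFun (funext fun k => by simp [pow_succ, pow_mul])

end

section

variable {K} [CharZero K]

lemma RatFunc.eventually_eval_denom_natCast_ne_zero (f : RatFunc K) :
    ∀ᶠ k : ℕ in atTop, f.denom.eval (k : K) ≠ 0 := by
  rw [← Nat.cofinite_eq_atTop]
  exact ((finite_setOfPred_isRoot f.denom_ne_zero).preimage
    Nat.cast_injective.injOn).eventually_cofinite_notMem

noncomputable def evalGerm : RatFunc K →+* Germ (atTop : Filter ℕ) K where
  toFun f := ↑(evalSeq K f)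
  map_one' := congrArg Germ.ofFun (funext fun _ => RatFunc.eval_one ..)
  map_mul' f g := Germ.coe_eq.mpr <| by
    filter_upwards [f.eventually_eval_denom_natCast_ne_zero,
      g.eventually_eval_denom_natCast_ne_zero] with k hf hg
    exact RatFunc.eval_mul (f := RingHom.id K) (a := (k : K)) hf hg
  map_zero' := congrArg Germ.ofFun (funext fun _ => RatFunc.eval_zero ..)
  map_add' f g := Germ.coe_eq.mpr <| by
    filter_upwards [f.eventually_eval_denom_natCast_ne_zero,
      g.eventually_eval_denom_natCast_ne_zero] with k hf hg
    exact RatFunc.eval_add (f := RingHom.id K) (a := (k : K)) hf hg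

lemma evalGerm_algebraMap (p : K[X]) :
    evalGerm (algebraMap K[X] (RatFunc K) p) = ↑(fun k : ℕ => p.eval (k : K)) :=
  congrArg Germ.ofFun (funext fun _ => by simp [evalSeq, RatFunc.eval_algebraMap])

lemma tau2_eq (f : RatFunc K × RatFunc K) :
    tau2 K f = evalGerm f.1 + altSign * evalGerm f.2 := rfl

lemma compTendstoRingHom_succ_evalGerm (σ : RatFunc K →+* RatFunc K)
    (hσ : ∀ q : K[X], σ (algebraMap K[X] (RatFunc K) q)
      = algebraMap K[X] (RatFunc K) (taylor (1 : K) q)) (f : RatFunc K) :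
    Germ.compTendstoRingHom (β := K) (· + 1) (tendsto_add_atTop_nat 1) (evalGerm f)
      = evalGerm (σ f) := by
  have hext : (Germ.compTendstoRingHom (· + 1) (tendsto_add_atTop_nat 1)).comp evalGerm
      = evalGerm.comp σ := IsLocalization.ringHom_ext (nonZeroDivisors K[X]) <|
    RingHom.ext fun p => by
      simp only [RingHom.comp_apply, hσ, evalGerm_algebraMap, Germ.compTendstoRingHom_coe]
      congr 1
      funext k
      simp [taylor_eval]
  exact RingHom.congr_fun hext f

lemma eq_zero_of_compTendstoRingHom_evalGerm_eq_zero {u : ℕ → ℕ} (hu : Tendsto u atTop atTop)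
    {f : RatFunc K} (h : Germ.compTendstoRingHom u hu (evalGerm f) = 0) : f = 0 := by
  have hvanish : ∃ᶠ k in atTop, evalSeq K f k = 0 := hu.frequently (Germ.coe_eq.mp h).frequently
  have hroots : ∃ᶠ k : ℕ in atTop, f.num.IsRoot (k : K) :=
    (hvanish.and_eventually f.eventually_eval_denom_natCast_ne_zero).mono fun k ⟨hk, hd⟩ =>
      (div_eq_zero_iff.mp hk).resolve_right hd
  rw [← RatFunc.num_eq_zero_iff]
  refine eq_zero_of_infinite_isRoot _ (Set.Infinite.mono ?_
    ((Nat.frequently_atTop_iff_infinite.mp hroots).image Nat.cast_injective.injOn))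
  rintro _ ⟨k, hk, rfl⟩
  exact hk

lemma tau2_sub (f g : RatFunc K × RatFunc K) : tau2 K (f - g) = tau2 K f - tau2 K g := by
  simp only [tau2_eq, Prod.fst_sub, Prod.snd_sub, map_sub]
  ring

lemma eq_zero_of_tau2_eq_zero {f : RatFunc K × RatFunc K} (h : tau2 K f = 0) : f = 0 := by
  have hu₀ : Tendsto (fun i : ℕ => 2 * i) atTop atTop :=
    tendsto_atTop_mono (fun i => Nat.le_mul_of_pos_left i two_pos) tendsto_id
  have hu₁ : Tendsto (fun i : ℕ => 2 * i + 1) atTop atTop :=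
    (tendsto_add_atTop_nat 1).comp hu₀
  have hsum : f.1 + f.2 = 0 := eq_zero_of_compTendstoRingHom_evalGerm_eq_zero hu₀ <| by
    simpa [tau2_eq, compTendstoRingHom_two_mul_altSign] using
      congrArg (Germ.compTendstoRingHom _ hu₀) h
  have hdiff : f.1 - f.2 = 0 := eq_zero_of_compTendstoRingHom_evalGerm_eq_zero hu₁ <| by
    simpa [tau2_eq, compTendstoRingHom_two_mul_add_one_altSign, sub_eq_add_neg] using
      congrArg (Germ.compTendstoRingHom _ hu₁) h
  have h₁ : f.1 = 0 := (mul_eq_zero.mp (by linear_combination hsum + hdiff :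
    (2 : RatFunc K) * f.1 = 0)).resolve_left two_ne_zero
  exact Prod.ext h₁ (by rw [Prod.snd_zero]; linear_combination hsum - h₁)

end

/-- `τ : K(n)[x] → S(K)` is an injective difference ring homomorphism, where on
`K(n)[x]` (with `x² = 1`, so `(f₀,f₁)·(g₀,g₁) = (f₀g₀+f₁g₁, f₀g₁+f₁g₀)`) the
automorphism is `σ(f₀ + f₁ x) = σ(f₀) - σ(f₁)·x`, and `S` is the shift on germs. -/
theorem tau2_is_difference_ring_embedding [CharZero K]
    (σ : RatFunc K ≃+* RatFunc K)
    (hσ : ∀ q : Polynomial K,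
      σ (algebraMap (Polynomial K) (RatFunc K) q)
        = algebraMap (Polynomial K) (RatFunc K) (Polynomial.taylor (1 : K) q)) :
    Function.Injective (tau2 K) ∧
    tau2 K (1, 0) = 1 ∧
    (∀ f g : RatFunc K × RatFunc K, tau2 K (f.1 + g.1, f.2 + g.2) = tau2 K f + tau2 K g) ∧
    (∀ f g : RatFunc K × RatFunc K,
      tau2 K (f.1 * g.1 + f.2 * g.2, f.1 * g.2 + f.2 * g.1) = tau2 K f * tau2 K g) ∧
    (∀ f : RatFunc K × RatFunc K,
      tau2 K (σ f.1, -σ f.2)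
        = (tau2 K f).compTendsto (fun n => n + 1) (tendsto_add_atTop_nat 1)) := by
  refine ⟨fun f g h => sub_eq_zero.mp (eq_zero_of_tau2_eq_zero (by rw [tau2_sub, h, sub_self])),
    ?_, fun f g => ?_, fun f g => ?_, fun f => ?_⟩
  · simp [tau2_eq]
  · simp only [tau2_eq, map_add]
    ring
  · simp only [tau2_eq, map_add, map_mul]
    linear_combination -(evalGerm f.2 * evalGerm g.2) * altSign_mul_self (R := K)
  · have hshift := compTendstoRingHom_succ_evalGerm σ.toRingHom hσ
    change _ = Germ.compTendstoRingHom _ (tendsto_add_atTop_nat 1) (tau2 K f)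
    simp only [tau2_eq, map_add, map_mul, map_neg, compTendstoRingHom_succ_altSign, hshift,
      RingEquiv.toRingHom_eq_coe, RingEquiv.coe_toRingHom]
    ring
end

section
/- Let H be a quasi-shuffle algebra on a graded alphabet G over a ring R, with quasi-shuffle product defined by ε * w = w * ε = w and aw * bv = a(w * bv) + b(aw * v) − [a,b](w * v), where [·,·]: Ḡ × Ḡ → Ḡ satisfies [a,0] = 0, [a,b] = [b,a], [[a,b],c] = [a,[b,c]], and |[a,b]| = |a|+|b| or [a,b] = 0. Then the quasi-shuffle product * is commutative and associative on R⟨G⟩. -/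
section QuasiShuffle

variable {G : Type*} {R : Type*} [CommRing R]

/-- Prepend a letter to every word of a formal linear combination of words. -/
noncomputable def consMap (a : G) (m : List G →₀ R) : List G →₀ R :=
  m.mapDomain (a :: ·)

/-- The quasi-shuffle product of two words, as an element of the free module
`R⟨G⟩` on the words: `ε * w = w * ε = w` and
`a u * b v = a (u * b v) + b (a u * v) - [a,b] (u * v)`. -/
noncomputable def qs (br : G → G → Option G) : List G → List G → (List G →₀ R)
  | [], w => Finsupp.single w 1
  | u, [] => Finsupp.single u 1
  | a :: u, b :: v =>
      consMap a (qs br u (b :: v)) + consMap b (qs br (a :: u) v) -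
        (br a b).elim 0 fun c => consMap c (qs br u v)
termination_by u v => u.length + v.length
decreasing_by all_goals (simp [List.length_cons]; try omega)

/-- The bilinear extension of the quasi-shuffle product to `R⟨G⟩`. -/
noncomputable def star (br : G → G → Option G) (f g : List G →₀ R) : List G →₀ R :=
  f.sum fun u cu => g.sum fun v cv => (cu * cv) • qs br u v

/-!
Commutativity follows by induction on the total length, since the defining recursion is symmetric
once `[a,b] = [b,a]`. For associativity, expanding `(au * bv) * cw` and `au * (bv * cw)` by the
recursion (once on each level, using bilinearity) gives in both cases
`a(u*bv*cw) + b(au*v*cw) + c(au*bv*w) - [a,b](u*v*cw) - [a,c](u*bv*w) - [b,c](au*v*w) + d(u*v*w)`,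
with triple products bracketed to the left, respectively to the right, and `d = [[a,b],c]`,
respectively `d = [a,[b,c]]`. The triple products have smaller total length, so they agree by
induction, and the two values of `d` agree by associativity of the bracket.
-/

namespace QuasiShuffle

/-- Prepending a letter of `Ḡ = Option G`, where prepending `0 = none` gives `0`. -/
noncomputable def prepend : Option G → (List G →₀ R) →ₗ[R] (List G →₀ R)
  | none => 0
  | some a => Finsupp.lmapDomain R R (a :: ·)

@[simp]
theorem prepend_none : (prepend none : (List G →₀ R) →ₗ[R] (List G →₀ R)) = 0 := rfl

@[simp]
theorem prepend_some_single (a : G) (u : List G) (c : R) :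
    prepend (some a) (Finsupp.single u c) = Finsupp.single (a :: u) c :=
  Finsupp.mapDomain_single

variable (br : G → G → Option G)

theorem qs_nil_left (w : List G) : qs br [] w = (Finsupp.single w 1 : List G →₀ R) := by
  cases w <;> rw [qs]

theorem qs_nil_right (u : List G) : qs br u [] = (Finsupp.single u 1 : List G →₀ R) := by
  cases u with
  | nil => rw [qs]
  | cons a u => rw [qs]; exact List.cons_ne_nil a u

theorem qs_cons_cons (a b : G) (u v : List G) :
    (qs br (a :: u) (b :: v) : List G →₀ R) =
      prepend (some a) (qs br u (b :: v)) + prepend (some b) (qs br (a :: u) v) -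
        prepend (br a b) (qs br u v) := by
  rw [qs]
  cases br a b <;> rfl

theorem qs_comm (hcomm : ∀ a b : G, br a b = br b a) :
    ∀ u v : List G, (qs br u v : List G →₀ R) = qs br v u
  | [], v => by rw [qs_nil_left, qs_nil_right]
  | u, [] => by rw [qs_nil_left, qs_nil_right]
  | a :: u, b :: v => by
    rw [qs_cons_cons, qs_cons_cons, hcomm, qs_comm hcomm u (b :: v), qs_comm hcomm (a :: u) v,
      qs_comm hcomm u v]
    abel
termination_by u v => u.length + v.length

noncomputable def qsBilin : (List G →₀ R) →ₗ[R] (List G →₀ R) →ₗ[R] (List G →₀ R) :=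
  Finsupp.lift _ R _ fun u => Finsupp.lift _ R _ fun v => qs br u v

theorem star_eq_qsBilin (f g : List G →₀ R) : star br f g = qsBilin br f g := by
  simp only [_root_.star, qsBilin, Finsupp.lift_apply, Finsupp.sum, LinearMap.coe_sum,
    Finset.sum_apply, LinearMap.smul_apply, Finset.smul_sum, smul_smul]

@[simp]
theorem qsBilin_single_single (u v : List G) (c d : R) :
    qsBilin br (Finsupp.single u c) (Finsupp.single v d) = (c * d) • qs br u v := by
  simp [qsBilin, mul_smul]

theorem qsBilin_nil_left (m : List G →₀ R) : qsBilin br (Finsupp.single [] 1) m = m := by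
  have : qsBilin br (Finsupp.single [] (1 : R)) = LinearMap.id := by
    ext v : 4
    simp [qs_nil_left]
  exact LinearMap.congr_fun this m

theorem qsBilin_nil_right (m : List G →₀ R) : qsBilin br m (Finsupp.single [] 1) = m := by
  have : (qsBilin br).flip (Finsupp.single [] (1 : R)) = LinearMap.id := by
    ext u : 4
    simp [qs_nil_right]
  exact LinearMap.congr_fun this m

theorem qsBilin_prepend_prepend (o p : Option G) (m n : List G →₀ R) :
    qsBilin br (prepend o m) (prepend p n) =
      prepend o (qsBilin br m (prepend p n)) + prepend p (qsBilin br (prepend o m) n) -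
        prepend (o.bind fun x => p.bind (br x)) (qsBilin br m n) := by
  rcases o with _ | a
  · simp
  rcases p with _ | c
  · simp
  induction m using Finsupp.induction_linear with
  | zero => simp
  | add m₁ m₂ h₁ h₂ => simp only [map_add, LinearMap.add_apply, h₁, h₂]; abel
  | single u x =>
    induction n using Finsupp.induction_linear with
    | zero => simp
    | add n₁ n₂ h₁ h₂ => simp only [map_add, h₁, h₂]; abel
    | single v y => simp [qs_cons_cons, smul_sub, smul_add]

theorem qsBilin_comm (hcomm : ∀ a b : G, br a b = br b a) (f g : List G →₀ R) :
    qsBilin br f g = qsBilin br g f := by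
  have : qsBilin br (R := R) = (qsBilin br).flip := by
    ext u v : 4
    simp [qs_comm br hcomm u v]
  exact LinearMap.congr_fun₂ this f g

noncomputable def tripleExpansion (t : List G → List G → List G → List G →₀ R) (d : Option G)
    (a b c : G) (u v w : List G) : List G →₀ R :=
  prepend (some a) (t u (b :: v) (c :: w)) + prepend (some b) (t (a :: u) v (c :: w)) +
    prepend (some c) (t (a :: u) (b :: v) w) - prepend (br a b) (t u v (c :: w)) -
    prepend (br a c) (t u (b :: v) w) - prepend (br b c) (t (a :: u) v w) +
    prepend d (t u v w)

theorem tripleExpansion_congr {t t' : List G → List G → List G → List G →₀ R} {d : Option G}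
    {a b c : G} {u v w : List G}
    (h : ∀ x y z : List G,
      x.length + y.length + z.length < u.length + v.length + w.length + 3 → t x y z = t' x y z) :
    tripleExpansion br t d a b c u v w = tripleExpansion br t' d a b c u v w := by
  simp only [tripleExpansion]
  rw [h, h, h, h, h, h, h] <;> simp <;> omega

theorem qsBilin_qs_single_eq_tripleExpansion (a b c : G) (u v w : List G) :
    qsBilin br (qs br (a :: u) (b :: v)) (Finsupp.single (c :: w) (1 : R)) =
      tripleExpansion br (fun x y z => qsBilin br (qs br x y) (Finsupp.single z 1))
        ((br a b).bind fun d => br d c) a b c u v w := by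
  simp only [tripleExpansion, ← prepend_some_single c w, qs_cons_cons br a b]
  simp only [map_add, map_sub, LinearMap.add_apply, LinearMap.sub_apply, qsBilin_prepend_prepend,
    Option.bind_some]
  abel

theorem qsBilin_single_qs_eq_tripleExpansion (a b c : G) (u v w : List G) :
    qsBilin br (Finsupp.single (a :: u) (1 : R)) (qs br (b :: v) (c :: w)) =
      tripleExpansion br (fun x y z => qsBilin br (Finsupp.single x 1) (qs br y z))
        ((br b c).bind fun d => br a d) a b c u v w := by
  simp only [tripleExpansion, ← prepend_some_single a u, qs_cons_cons br b c]
  simp only [map_add, map_sub, qsBilin_prepend_prepend, Option.bind_some]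
  abel

theorem qs_assoc
    (hassoc : ∀ a b c : G, (br a b).bind (fun d => br d c) = (br b c).bind (fun d => br a d)) :
    ∀ u v w : List G,
      qsBilin br (qs br u v) (Finsupp.single w (1 : R)) =
        qsBilin br (Finsupp.single u 1) (qs br v w)
  | [], v, w => by rw [qs_nil_left, qsBilin_nil_left]; simp
  | u, [], w => by rw [qs_nil_right, qs_nil_left]
  | u, v, [] => by rw [qs_nil_right, qsBilin_nil_right]; simp
  | a :: u, b :: v, c :: w => by
    rw [qsBilin_qs_single_eq_tripleExpansion, qsBilin_single_qs_eq_tripleExpansion, hassoc]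
    exact tripleExpansion_congr br fun x y z _ => qs_assoc hassoc x y z
termination_by u v w => u.length + v.length + w.length

theorem qsBilin_assoc
    (hassoc : ∀ a b c : G, (br a b).bind (fun d => br d c) = (br b c).bind (fun d => br a d))
    (f g h : List G →₀ R) : qsBilin br (qsBilin br f g) h = qsBilin br f (qsBilin br g h) := by
  have on_words (v w : List G) :
      (qsBilin br).flip (Finsupp.single w 1) ∘ₗ (qsBilin br).flip (Finsupp.single v (1 : R)) =
        (qsBilin br).flip (qs br v w) := by
    ext u : 3
    simp [qs_assoc br hassoc]
  have : qsBilin br ∘ₗ qsBilin br f = (qsBilin br).compr₂ (qsBilin br f) := by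
    ext v w : 4
    simpa using LinearMap.congr_fun (on_words v w) f
  exact LinearMap.congr_fun₂ this g h

end QuasiShuffle

theorem quasiShuffle_comm_assoc_general
    (br : G → G → Option G)
    (hcomm : ∀ a b : G, br a b = br b a)
    (hassoc : ∀ a b c : G,
      (br a b).bind (fun d => br d c) = (br b c).bind (fun d => br a d)) :
    (∀ f g : List G →₀ R, star br f g = star br g f) ∧
    (∀ f g h : List G →₀ R, star br (star br f g) h = star br f (star br g h)) := by
  simp only [QuasiShuffle.star_eq_qsBilin]
  exact ⟨QuasiShuffle.qsBilin_comm br hcomm, QuasiShuffle.qsBilin_assoc br hassoc⟩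

/-- Hoffman's theorem: if the bracket `[·,·] : Ḡ × Ḡ → Ḡ` (with `Ḡ = G ∪ {0}`
modelled by `Option G`) is commutative, associative and compatible with the
grading, then the quasi-shuffle product is commutative and associative on `R⟨G⟩`. -/
theorem quasiShuffle_comm_assoc [Algebra ℚ R]
    (deg : G → ℕ) (br : G → G → Option G)
    (hcomm : ∀ a b : G, br a b = br b a)
    (hassoc : ∀ a b c : G,
      (br a b).bind (fun d => br d c) = (br b c).bind (fun d => br a d))
    (hgrade : ∀ a b c : G, br a b = some c → deg c = deg a + deg b) :
    (∀ f g : List G →₀ R, star br f g = star br g f) ∧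
    (∀ f g h : List G →₀ R, star br (star br f g) h = star br f (star br g h)) :=
  quasiShuffle_comm_assoc_general br hcomm hassoc

end QuasiShuffle
end
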